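/- Let C⃗ be a directed cycle on vertices in a graph, let F⃗ be the consistently oriented version of C⃗ and S the undirected graph on the reversed edges, with Ltil = L_F - L_S (directed Laplacian of F minus undirected Laplacian of S). Then both random outcomes of toggling the cycle—adding L_C + L_F - L_S or L_C - L_F + L_S (each the Laplacian of keeping doubled clockwise or counter-clockwise edges)—preserve, for every vertex, the difference between weighted in-degree and weighted out-degree of C⃗. -/

import Mathlib

/-!
A single directed edge `u → v` of weight `w` sends the all-ones vector to `w (e_u - e_v)`, and an
undirected edge sends it to `0`. Around the consistently oriented cycle `F⃗` every vertex is the head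
of exactly one edge and the tail of exactly one edge, so the vectors `e_{c k} - e_{c (k+1)}`
telescope to `0`. Hence `L_F 𝟙 = L_S 𝟙 = 0`, and adding `± (L_F - L_S)` does not change `L_C 𝟙`.
-/

open Matrix Finset

/-- `bv u v = e_u - e_v`. -/
def bv {n : ℕ} (u v : Fin n) : Fin n → ℝ := Pi.single u 1 - Pi.single v 1

/-- Directed Laplacian (`D - Aᵀ`) of a single directed edge `u → v` of weight `w`. -/
def dirLap {n : ℕ} (u v : Fin n) (w : ℝ) : Matrix (Fin n) (Fin n) ℝ :=
  w • Matrix.vecMulVec (bv u v) (Pi.single u 1)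

/-- Undirected Laplacian of a single edge `{u, v}` of weight `w`. -/
def undirLap {n : ℕ} (u v : Fin n) (w : ℝ) : Matrix (Fin n) (Fin n) ℝ :=
  w • Matrix.vecMulVec (bv u v) (bv u v)

section Laplacians

variable {n : ℕ}

theorem bv_dotProduct (u v : Fin n) (x : Fin n → ℝ) : bv u v ⬝ᵥ x = x u - x v := by
  simp [bv, sub_dotProduct]

theorem dirLap_mulVec (u v : Fin n) (w : ℝ) (x : Fin n → ℝ) :
    dirLap u v w *ᵥ x = (w * x u) • bv u v := by
  rw [dirLap, smul_mulVec, vecMulVec_mulVec, single_dotProduct, one_mul, op_smul_eq_smul,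
    smul_smul]

theorem undirLap_mulVec (u v : Fin n) (w : ℝ) (x : Fin n → ℝ) :
    undirLap u v w *ᵥ x = (w * (x u - x v)) • bv u v := by
  rw [undirLap, smul_mulVec, vecMulVec_mulVec, bv_dotProduct, op_smul_eq_smul, smul_smul]

theorem sum_bv_cycle {L : ℕ} [NeZero L] (c : Fin L → Fin n) :
    ∑ k : Fin L, bv (c k) (c (k + 1)) = 0 := by
  simp only [bv, sum_sub_distrib]
  rw [sub_eq_zero]
  exact (Equiv.sum_comp (Equiv.addRight 1) fun k => (Pi.single (c k) 1 : Fin n → ℝ)).symm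

theorem sum_dirLap_cycle_mulVec_one {L : ℕ} [NeZero L] (c : Fin L → Fin n) (w : ℝ) :
    (∑ k : Fin L, dirLap (c k) (c (k + 1)) w) *ᵥ (fun _ => (1 : ℝ)) = 0 := by
  simp only [sum_mulVec, dirLap_mulVec, mul_one, ← smul_sum, sum_bv_cycle, smul_zero]

theorem sum_undirLap_mulVec_one {ι : Type*} (t : Finset ι) (u v : ι → Fin n) (w : ℝ) :
    (∑ k ∈ t, undirLap (u k) (v k) w) *ᵥ (fun _ => (1 : ℝ)) = 0 := by
  simp [sum_mulVec, undirLap_mulVec]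

end Laplacians

theorem stmt_12_general {n L : ℕ} [NeZero L] (c : Fin L → Fin n)
    (s : Fin L → Bool) (w : ℝ)
    (LC LF LS : Matrix (Fin n) (Fin n) ℝ)
    (hLF : LF = ∑ k : Fin L, dirLap (c k) (c (k + 1)) w)
    (hLS : LS = ∑ k ∈ Finset.univ.filter (fun k => ¬ s k), undirLap (c k) (c (k + 1)) w) :
    (LC + LF - LS) *ᵥ (fun _ => (1 : ℝ)) = LC *ᵥ (fun _ => (1 : ℝ)) ∧
    (LC - LF + LS) *ᵥ (fun _ => (1 : ℝ)) = LC *ᵥ (fun _ => (1 : ℝ)) := by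
  have hF : LF *ᵥ (fun _ => (1 : ℝ)) = 0 := hLF ▸ sum_dirLap_cycle_mulVec_one c w
  have hS : LS *ᵥ (fun _ => (1 : ℝ)) = 0 := hLS ▸ sum_undirLap_mulVec_one _ _ _ w
  constructor <;> simp [add_mulVec, sub_mulVec, hF, hS]

/-- Let `C⃗` be a directed cycle (vertices `c 0, …, c (L-1)`, edge `k` oriented
`c k → c (k+1)` when `s k` is true — clockwise — and `c (k+1) → c k` otherwise), with
uniform weight `w`.  Let `F⃗` be the consistently oriented version, `S` the undirected
graph on the reversed edges and `Ltil = L_F - L_S`.  Then both toggling outcomes,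
`L_C + L_F - L_S` and `L_C - L_F + L_S`, have the same row sums `(·) *ᵥ 𝟙` as `L_C`;
i.e. for every vertex the difference between weighted out-degree and in-degree of `C⃗`
is preserved. -/
theorem stmt_12 {n L : ℕ} [NeZero L] (c : Fin L → Fin n) (hc : Function.Injective c)
    (s : Fin L → Bool) (w : ℝ) (hw : 0 < w)
    (LC LF LS : Matrix (Fin n) (Fin n) ℝ)
    (hLC : LC = ∑ k : Fin L,
      if s k then dirLap (c k) (c (k + 1)) w else dirLap (c (k + 1)) (c k) w)
    (hLF : LF = ∑ k : Fin L, dirLap (c k) (c (k + 1)) w)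
    (hLS : LS = ∑ k ∈ Finset.univ.filter (fun k => ¬ s k), undirLap (c k) (c (k + 1)) w) :
    (LC + LF - LS) *ᵥ (fun _ => (1 : ℝ)) = LC *ᵥ (fun _ => (1 : ℝ)) ∧
    (LC - LF + LS) *ᵥ (fun _ => (1 : ℝ)) = LC *ᵥ (fun _ => (1 : ℝ)) :=
  stmt_12_general c s w LC LF LS hLF hLS
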